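/- Let k be a field and n ≥ 1. Let c_1, …, c_n and d_{j,i} (for 1 ≤ i < j ≤ n) be natural numbers. In the polynomial ring k[a_{1,1}, a_{1,2}, …, a_{n,1}, a_{n,2}, c] define recursively E_1 = a_{1,1}a_{1,2} + (−1)^{1+c_1} c^{c_1} and, for 1 ≤ j ≤ n−1, E_{j+1} = a_{j+1,1}a_{j+1,2} + (−1)^{1+c_{j+1}} c^{c_{j+1}} ∏_{i=1}^{j} E_i^{d_{j+1,i}}. Then each E_i is nonzero, ord(E_1) = min{2, c_1}, and for every 2 ≤ i ≤ n, ord(E_i) = min{2, c_i + Σ_{j=1}^{i−1} d_{i,j} · ord(E_j)}. -/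

import Mathlib

/-!
The polynomial ring `k[a_{1,1}, a_{1,2}, …, a_{n,1}, a_{n,2}, c]` is modelled as multivariate
polynomials in the variables `some (i, false) = a_{i,1}`, `some (i, true) = a_{i,2}` and
`none = c`.

`ord P` is the order of `P` viewed as a formal power series, and over a domain this order is
additive on products. The tail `± c^{c_j} ∏_{i<j} E_i^{d_{j,i}}` of `E_j` only involves `c` and the
variables `a_{i,·}` with `i < j`, so it does not contain the monomial `a_{j,1}a_{j,2}`. Hence the
order of `E_j` is the minimum of `2` and the order `c_j + ∑ d_{j,i} ord(E_i)` of the tail; in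
particular it is finite, so `E_j ≠ 0`.
-/

namespace Stmt4

open MvPolynomial

noncomputable def ord {σ : Type*} {k : Type*} [CommSemiring k] (P : MvPolynomial σ k) : ℕ :=
  sInf ((fun s : σ →₀ ℕ => s.sum fun _ e => e) '' (P.support : Set (σ →₀ ℕ)))

variable {k : Type*} [Field k]

/-- `E_1 = a_{1,1}a_{1,2} + (−1)^{1+c_1} c^{c_1}` and, recursively,
`E_{j+1} = a_{j+1,1}a_{j+1,2} + (−1)^{1+c_{j+1}} c^{c_{j+1}} ∏_{i=1}^{j} E_i^{d_{j+1,i}}`.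
(`E 0` is a junk value, indices are 1-based.) -/
noncomputable def E (k : Type*) [Field k] (c : ℕ → ℕ) (d : ℕ → ℕ → ℕ) :
    ℕ → MvPolynomial (Option (ℕ × Bool)) k
  | 0 => 1
  | j + 1 =>
      X (some (j + 1, false)) * X (some (j + 1, true)) +
        (-1 : MvPolynomial (Option (ℕ × Bool)) k) ^ (1 + c (j + 1)) *
          X none ^ c (j + 1) *
          ∏ i ∈ (Finset.range j).attach, E k c d (i.1 + 1) ^ d (j + 1) (i.1 + 1)
  decreasing_by
    have := i.2
    simp only [Finset.mem_range] at this
    omega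

section PowerSeries

open MvPowerSeries

variable {σ R : Type*}

theorem _root_.MvPowerSeries.order_one [Semiring R] [Nontrivial R] :
    (1 : MvPowerSeries σ R).order = 0 :=
  weightedOrder_one _

theorem _root_.MvPowerSeries.order_X [Semiring R] [Nontrivial R] (s : σ) :
    (X s : MvPowerSeries σ R).order = 1 := by
  rw [MvPowerSeries.X, order_monomial_of_ne_zero one_ne_zero, Finsupp.degree_single, Nat.cast_one]

theorem _root_.MvPowerSeries.order_pow [CommSemiring R] [NoZeroDivisors R] [Nontrivial R]
    (f : MvPowerSeries σ R) (n : ℕ) : (f ^ n).order = n * f.order := by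
  induction n with
  | zero => rw [pow_zero, Nat.cast_zero, zero_mul, order_one]
  | succ n ih => rw [pow_succ, order_mul, ih, Nat.cast_succ, add_one_mul]

theorem _root_.MvPowerSeries.order_monomial_add [Semiring R] {f : MvPowerSeries σ R}
    {s : σ →₀ ℕ} {a : R} (ha : a ≠ 0) (hf : coeff s f = 0) :
    (monomial s a + f).order = min (s.degree : ℕ∞) f.order := by
  have hmon : (monomial s a).order = s.degree := order_monomial_of_ne_zero ha
  refine le_antisymm (le_min (order_le (by simp [hf, ha])) ?_) (hmon ▸ min_order_le_add)
  rcases lt_or_ge f.order s.degree with hlt | hge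
  · rw [order_add_of_order_ne (hmon ▸ hlt.ne'), hmon]
    exact min_le_right _ _
  · exact (order_le (by simp [hf, ha])).trans hge

theorem ord_eq_order [CommSemiring R] {P : MvPolynomial σ R} (hP : P ≠ 0) :
    (ord P : ℕ∞) = (P : MvPowerSeries σ R).order := by
  have hne : ((fun s : σ →₀ ℕ => s.sum fun _ e => e) '' (P.support : Set (σ →₀ ℕ))).Nonempty :=
    (Finset.coe_nonempty.mpr (support_nonempty.mpr hP)).image _
  obtain ⟨s, hs, hs_ord⟩ := Nat.sInf_mem hne
  refine (order_eq_nat.mpr ⟨⟨s, ?_, hs_ord⟩, fun t ht => ?_⟩).symm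
  · simpa [coeff_coe] using hs
  · by_contra hcoeff
    rw [coeff_coe, ← ne_eq, ← mem_support_iff] at hcoeff
    exact (Nat.sInf_le ⟨t, hcoeff, rfl⟩ : ord P ≤ t.degree).not_gt ht

end PowerSeries

section Recursion

variable (k) (c : ℕ → ℕ) (d : ℕ → ℕ → ℕ)

noncomputable def tailTerm (j : ℕ) : MvPolynomial (Option (ℕ × Bool)) k :=
  (-1) ^ (1 + c (j + 1)) * X none ^ c (j + 1) * ∏ i ∈ Finset.Icc 1 j, E k c d i ^ d (j + 1) i

theorem E_succ (j : ℕ) :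
    E k c d (j + 1) = X (some (j + 1, false)) * X (some (j + 1, true)) + tailTerm k c d j := by
  rw [E, tailTerm,
    Finset.prod_attach (Finset.range j) fun i => E k c d (i + 1) ^ d (j + 1) (i + 1),
    ← Finset.Ico_add_one_right_eq_Icc, Finset.prod_Ico_eq_prod_range, Nat.add_sub_cancel]
  simp_rw [add_comm 1]

def varsUpTo (i : ℕ) : Set (Option (ℕ × Bool)) := {v | ∀ p ∈ v, p.1 ≤ i}

theorem varsUpTo_mono : Monotone varsUpTo := fun _ _ hij _ hv p hp => (hv p hp).trans hij

theorem tailTerm_mem_supported {j : ℕ}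
    (h : ∀ i ∈ Finset.Icc 1 j, E k c d i ∈ supported k (varsUpTo i)) :
    tailTerm k c d j ∈ supported k (varsUpTo j) := by
  refine mul_mem (mul_mem (pow_mem (neg_mem (one_mem _)) _)
    (pow_mem (X_mem_supported.mpr (by simp [varsUpTo])) _)) (prod_mem fun i hi => pow_mem ?_ _)
  exact supported_mono (varsUpTo_mono (Finset.mem_Icc.mp hi).2) (h i hi)

theorem E_mem_supported (i : ℕ) : E k c d i ∈ supported k (varsUpTo i) := by
  induction i using Nat.strong_induction_on with
  | _ i ih =>
    match i with
    | 0 => rw [E]; exact one_mem _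
    | j + 1 =>
      rw [E_succ]
      refine add_mem (mul_mem (X_mem_supported.mpr (by simp [varsUpTo]))
        (X_mem_supported.mpr (by simp [varsUpTo]))) ?_
      refine supported_mono (varsUpTo_mono j.le_succ) ?_
      exact tailTerm_mem_supported k c d fun i hi => ih i (by grind)

theorem coeff_tailTerm_eq_zero (j : ℕ) :
    coeff (Finsupp.single (some (j + 1, false)) 1 + Finsupp.single (some (j + 1, true)) 1)
      (tailTerm k c d j) = 0 := by
  by_contra h
  have hmem := mem_supported.mp (tailTerm_mem_supported k c d fun i _ => E_mem_supported k c d i)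
    ((mem_vars_iff_mem_support (some (j + 1, false))).mpr ⟨_, mem_support_iff.mpr h, by simp⟩)
  simp [varsUpTo] at hmem

theorem order_tailTerm (j : ℕ) :
    (tailTerm k c d j : MvPowerSeries (Option (ℕ × Bool)) k).order =
      c (j + 1) + ∑ i ∈ Finset.Icc 1 j,
        d (j + 1) i * (E k c d i : MvPowerSeries (Option (ℕ × Bool)) k).order := by
  simp only [tailTerm, ← coeToMvPowerSeries.ringHom_apply, map_mul, map_pow, map_prod, map_neg,
    map_one]
  simp only [coeToMvPowerSeries.ringHom_apply, coe_X, MvPowerSeries.order_mul,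
    MvPowerSeries.order_pow, MvPowerSeries.order_prod, MvPowerSeries.order_neg,
    MvPowerSeries.order_one, MvPowerSeries.order_X, mul_zero, zero_add, mul_one]

theorem order_E_succ (j : ℕ) :
    (E k c d (j + 1) : MvPowerSeries (Option (ℕ × Bool)) k).order =
      min 2 (c (j + 1) + ∑ i ∈ Finset.Icc 1 j,
        d (j + 1) i * (E k c d i : MvPowerSeries (Option (ℕ × Bool)) k).order) := by
  have hmonomial : (X (some (j + 1, false)) * X (some (j + 1, true)) :
      MvPolynomial (Option (ℕ × Bool)) k) =
      monomial
        (Finsupp.single (some (j + 1, false)) 1 + Finsupp.single (some (j + 1, true)) 1) 1 := by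
    rw [X, X, monomial_mul, one_mul]
  rw [E_succ, coe_add, hmonomial, coe_monomial,
    MvPowerSeries.order_monomial_add one_ne_zero (by rw [coeff_coe, coeff_tailTerm_eq_zero]),
    order_tailTerm, map_add, Finsupp.degree_single, Finsupp.degree_single]
  rfl

theorem E_ne_zero (i : ℕ) : E k c d i ≠ 0 := by
  rcases i with _ | j
  · rw [E]
    exact one_ne_zero
  · intro hzero
    have horder := order_E_succ k c d j
    rw [hzero, coe_zero, MvPowerSeries.order_zero] at horder
    exact ((min_le_left _ _).trans_lt (ENat.natCast_lt_top 2)).ne' horder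

theorem ord_E_succ (j : ℕ) :
    ord (E k c d (j + 1)) =
      min 2 (c (j + 1) + ∑ i ∈ Finset.Icc 1 j, d (j + 1) i * ord (E k c d i)) := by
  apply Nat.cast_injective (R := ℕ∞)
  rw [ord_eq_order (E_ne_zero k c d _), order_E_succ, Nat.mono_cast.map_min]
  push_cast [ord_eq_order (E_ne_zero k c d _)]
  rfl

end Recursion

theorem ord_E (n : ℕ) (c : ℕ → ℕ) (d : ℕ → ℕ → ℕ) :
    (∀ i, 1 ≤ i → i ≤ n → E k c d i ≠ 0) ∧
    ord (E k c d 1) = min 2 (c 1) ∧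
    ∀ i, 2 ≤ i → i ≤ n →
      ord (E k c d i) =
        min 2 (c i + ∑ j ∈ Finset.Icc 1 (i - 1), d i j * ord (E k c d j)) := by
  refine ⟨fun i _ _ => E_ne_zero k c d i, by simpa using ord_E_succ k c d 0, fun i hi _ => ?_⟩
  obtain ⟨j, rfl⟩ : ∃ j, i = j + 1 := ⟨i - 1, by omega⟩
  simpa using ord_E_succ k c d j

end Stmt4
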